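/- (Uniform stability of LR-εNVC-R) Let λ > 0, let S = ((x₁, s₁), …, (x_n, s_n)) be any dataset with x_i ∈ X and s_i ∈ [0, D̄], let i ∈ {1, …, n}, let θ̂ʳ be the minimizer over ℝ^p of R̂(θ; S) + λ·‖θ‖₂², and let θ̂ʳ^{\i} be the minimizer over ℝ^p of (1/n)·Σ_{j≠i} L(s_j, ⟨x_j, θ⟩) + λ·‖θ‖₂². Then sup over (x, s) ∈ X × [0, D̄] of |L(s, ⟨x, θ̂ʳ⟩) − L(s, ⟨x, θ̂ʳ^{\i}⟩)| ≤ (α ∨ (1 − α))²·X_max²·p / (2·n·λ). -/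
import Mathlib
set_option maxHeartbeats 800000

open RealInnerProductSpace

/-- The ε-insensitive newsvendor loss. -/
noncomputable def epsLoss (α ε₁ ε₂ s y : ℝ) : ℝ :=
  (1 - α) * max (y - s - ε₁) 0 + α * max (s + ε₂ - y) 0

lemma max_combo (a b t : ℝ) (h0 : 0 ≤ t) (h1 : t ≤ 1) :
    max ((1 - t) * a + t * b) 0 ≤ (1 - t) * max a 0 + t * max b 0 := by
  have h1' : (0:ℝ) ≤ 1 - t := by linarith
  refine max_le ?_ ?_
  · exact add_le_add (mul_le_mul_of_nonneg_left (le_max_left a 0) h1')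
      (mul_le_mul_of_nonneg_left (le_max_left b 0) h0)
  · exact add_nonneg (mul_nonneg h1' (le_max_right a 0)) (mul_nonneg h0 (le_max_right b 0))

lemma epsLoss_convex (α ε₁ ε₂ s u v t : ℝ) (hα₀ : 0 ≤ α) (hα₁ : α ≤ 1)
    (h0 : 0 ≤ t) (h1 : t ≤ 1) :
    epsLoss α ε₁ ε₂ s ((1 - t) * u + t * v) ≤
      (1 - t) * epsLoss α ε₁ ε₂ s u + t * epsLoss α ε₁ ε₂ s v := by
  unfold epsLoss
  have hA : (0:ℝ) ≤ 1 - α := by linarith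
  have hm1 := max_combo (u - s - ε₁) (v - s - ε₁) t h0 h1
  have hm2 := max_combo (s + ε₂ - u) (s + ε₂ - v) t h0 h1
  have e1 : (1 - t) * u + t * v - s - ε₁ = (1 - t) * (u - s - ε₁) + t * (v - s - ε₁) := by ring
  have e2 : s + ε₂ - ((1 - t) * u + t * v) = (1 - t) * (s + ε₂ - u) + t * (s + ε₂ - v) := by ring
  rw [e1, e2]
  refine le_trans (add_le_add (mul_le_mul_of_nonneg_left hm1 hA)
    (mul_le_mul_of_nonneg_left hm2 hα₀)) (le_of_eq (by ring))

lemma epsLoss_lipschitz_aux (α ε₁ ε₂ s y y' : ℝ) (hα₀ : 0 ≤ α) (hα₁ : α ≤ 1) (h : y' ≤ y) :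
    epsLoss α ε₁ ε₂ s y - epsLoss α ε₁ ε₂ s y' ≤ (1 - α) * (y - y') ∧
    epsLoss α ε₁ ε₂ s y' - epsLoss α ε₁ ε₂ s y ≤ α * (y - y') := by
  unfold epsLoss
  have hA : (0:ℝ) ≤ 1 - α := by linarith
  have m1mono : max (y' - s - ε₁) 0 ≤ max (y - s - ε₁) 0 :=
    max_le_max (by linarith) le_rfl
  have m2mono : max (s + ε₂ - y) 0 ≤ max (s + ε₂ - y') 0 :=
    max_le_max (by linarith) le_rfl
  have h1 : |max (y - s - ε₁) 0 - max (y' - s - ε₁) 0| ≤ y - y' := by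
    have := abs_max_sub_max_le_abs (y - s - ε₁) (y' - s - ε₁) 0
    rwa [show y - s - ε₁ - (y' - s - ε₁) = y - y' by ring,
      abs_of_nonneg (by linarith : (0:ℝ) ≤ y - y')] at this
  have h2 : |max (s + ε₂ - y') 0 - max (s + ε₂ - y) 0| ≤ y - y' := by
    have := abs_max_sub_max_le_abs (s + ε₂ - y') (s + ε₂ - y) 0
    rwa [show s + ε₂ - y' - (s + ε₂ - y) = y - y' by ring,
      abs_of_nonneg (by linarith : (0:ℝ) ≤ y - y')] at this
  have h1' := (abs_le.mp h1).2
  have h2' := (abs_le.mp h2).2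
  constructor
  · nlinarith [mul_le_mul_of_nonneg_left h1' hA,
      mul_le_mul_of_nonneg_left (sub_nonpos.mpr m2mono) hα₀]
  · nlinarith [mul_le_mul_of_nonneg_left h2' hα₀,
      mul_le_mul_of_nonneg_left (sub_nonpos.mpr m1mono) hA]

lemma epsLoss_lipschitz (α ε₁ ε₂ s y y' : ℝ) (hα₀ : 0 ≤ α) (hα₁ : α ≤ 1) :
    |epsLoss α ε₁ ε₂ s y - epsLoss α ε₁ ε₂ s y'| ≤ (α ⊔ (1 - α)) * |y - y'| := by
  have hM1 : α ≤ α ⊔ (1 - α) := le_max_left _ _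
  have hM2 : 1 - α ≤ α ⊔ (1 - α) := le_max_right _ _
  rcases le_total y' y with h | h
  · obtain ⟨c1, c2⟩ := epsLoss_lipschitz_aux α ε₁ ε₂ s y y' hα₀ hα₁ h
    rw [abs_of_nonneg (by linarith : (0:ℝ) ≤ y - y'), abs_le]
    constructor
    · nlinarith [mul_le_mul_of_nonneg_right hM1 (by linarith : (0:ℝ) ≤ y - y')]
    · nlinarith [mul_le_mul_of_nonneg_right hM2 (by linarith : (0:ℝ) ≤ y - y')]
  · obtain ⟨c1, c2⟩ := epsLoss_lipschitz_aux α ε₁ ε₂ s y' y hα₀ hα₁ h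
    rw [show y - y' = -(y' - y) by ring, abs_neg,
      abs_of_nonneg (by linarith : (0:ℝ) ≤ y' - y), abs_le]
    constructor
    · nlinarith [mul_le_mul_of_nonneg_right hM2 (by linarith : (0:ℝ) ≤ y' - y)]
    · nlinarith [mul_le_mul_of_nonneg_right hM1 (by linarith : (0:ℝ) ≤ y' - y)]

lemma norm_combo_sq {p : ℕ} (a b : EuclideanSpace ℝ (Fin p)) (t : ℝ) :
    ‖(1 - t) • a + t • b‖ ^ 2 =
      (1 - t) * ‖a‖ ^ 2 + t * ‖b‖ ^ 2 - t * (1 - t) * ‖a - b‖ ^ 2 := by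
  rw [← real_inner_self_eq_norm_sq, ← real_inner_self_eq_norm_sq,
    ← real_inner_self_eq_norm_sq, ← real_inner_self_eq_norm_sq]
  simp only [inner_add_left, inner_add_right, inner_sub_left, inner_sub_right,
    real_inner_smul_left, real_inner_smul_right, real_inner_comm b a]
  ring

lemma min_strong {p : ℕ} (lam : ℝ) (R : EuclideanSpace ℝ (Fin p) → ℝ)
    (a b : EuclideanSpace ℝ (Fin p))
    (hmin : ∀ θ, R a + lam * ‖a‖ ^ 2 ≤ R θ + lam * ‖θ‖ ^ 2)
    (hconv : ∀ t : ℝ, 0 < t → t < 1 →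
      R ((1 - t) • a + t • b) ≤ (1 - t) * R a + t * R b)
    (t : ℝ) (ht0 : 0 < t) (ht1 : t < 1) :
    (1 - t) * lam * ‖a - b‖ ^ 2 ≤ (R b + lam * ‖b‖ ^ 2) - (R a + lam * ‖a‖ ^ 2) := by
  have h1 := hmin ((1 - t) • a + t • b)
  rw [norm_combo_sq a b t] at h1
  have h2 := hconv t ht0 ht1
  have H : t * ((1 - t) * lam * ‖a - b‖ ^ 2) ≤
      t * ((R b + lam * ‖b‖ ^ 2) - (R a + lam * ‖a‖ ^ 2)) := by nlinarith
  exact le_of_mul_le_mul_left H ht0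

lemma risk_convex {p n : ℕ} (α ε₁ ε₂ : ℝ) (hα₀ : 0 ≤ α) (hα₁ : α ≤ 1) (c : ℝ) (hc : 0 ≤ c)
    (T : Finset (Fin n)) (xd : Fin n → EuclideanSpace ℝ (Fin p)) (sd : Fin n → ℝ)
    (a b : EuclideanSpace ℝ (Fin p)) (t : ℝ) (h0 : 0 ≤ t) (h1 : t ≤ 1) :
    c * ∑ j ∈ T, epsLoss α ε₁ ε₂ (sd j) ⟪xd j, (1 - t) • a + t • b⟫ ≤
      (1 - t) * (c * ∑ j ∈ T, epsLoss α ε₁ ε₂ (sd j) ⟪xd j, a⟫) +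
        t * (c * ∑ j ∈ T, epsLoss α ε₁ ε₂ (sd j) ⟪xd j, b⟫) := by
  have hsum : ∑ j ∈ T, epsLoss α ε₁ ε₂ (sd j) ⟪xd j, (1 - t) • a + t • b⟫ ≤
      ∑ j ∈ T, ((1 - t) * epsLoss α ε₁ ε₂ (sd j) ⟪xd j, a⟫ +
        t * epsLoss α ε₁ ε₂ (sd j) ⟪xd j, b⟫) := by
    refine Finset.sum_le_sum fun j _ => ?_
    rw [inner_add_right, real_inner_smul_right, real_inner_smul_right]
    exact epsLoss_convex α ε₁ ε₂ (sd j) _ _ t hα₀ hα₁ h0 h1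
  calc c * ∑ j ∈ T, epsLoss α ε₁ ε₂ (sd j) ⟪xd j, (1 - t) • a + t • b⟫
      ≤ c * ∑ j ∈ T, ((1 - t) * epsLoss α ε₁ ε₂ (sd j) ⟪xd j, a⟫ +
          t * epsLoss α ε₁ ε₂ (sd j) ⟪xd j, b⟫) := mul_le_mul_of_nonneg_left hsum hc
    _ = _ := by rw [Finset.sum_add_distrib, ← Finset.mul_sum, ← Finset.mul_sum]; ring

lemma limstep (a b : ℝ) (hb : 0 ≤ b)
    (h : ∀ t : ℝ, 0 < t → t < 1 → (1 - t) * a ≤ b) : a ≤ b := by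
  by_contra hc
  push_neg at hc
  have ha' : 0 < a := lt_of_le_of_lt hb hc
  have hba : b / a < 1 := (div_lt_one ha').mpr hc
  have hba0 : 0 ≤ b / a := div_nonneg hb ha'.le
  have key := h ((1 - b / a) / 2) (by linarith) (by linarith)
  have e : (1 - (1 - b / a) / 2) * a = (a + b) / 2 := by
    field_simp
    ring
  rw [e] at key
  linarith

/-- Uniform stability of LR-εNVC-R: if `θ̂ʳ` minimizes the regularized empirical
risk on the full dataset and `θ̂ʳⁱ` minimizes the regularized leave-one-out
empirical risk, then
`sup_{(x,s) ∈ X × [0,D̄]} |L(s,⟨x,θ̂ʳ⟩) − L(s,⟨x,θ̂ʳⁱ⟩)|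
  ≤ (α ∨ (1−α))² · X_max² · p / (2·n·lam)`. -/
theorem LR_eNVC_R_uniform_stability
    (α ε₁ ε₂ D Xmax lam : ℝ) (hα₀ : 0 < α) (hα₁ : α < 1) (hε : ε₁ > ε₂) (hε₂ : 0 ≤ ε₂)
    (hD : 0 < D) (hXmax : 0 < Xmax) (hlam : 0 < lam)
    (p : ℕ) (hp : 1 ≤ p) (X : Set (EuclideanSpace ℝ (Fin p)))
    (hX : ∀ x ∈ X, x ⟨0, by omega⟩ = 1 ∧ ‖x‖ ≤ Xmax * Real.sqrt p)
    (n : ℕ) (hn : 0 < n)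
    (xd : Fin n → EuclideanSpace ℝ (Fin p)) (sd : Fin n → ℝ)
    (hxd : ∀ j, xd j ∈ X) (hsd : ∀ j, sd j ∈ Set.Icc (0 : ℝ) D)
    (i : Fin n) (θhat θhatLOO : EuclideanSpace ℝ (Fin p))
    (hθhat : ∀ θ : EuclideanSpace ℝ (Fin p),
      (1 / (n : ℝ)) * ∑ j, epsLoss α ε₁ ε₂ (sd j) ⟪xd j, θhat⟫ + lam * ‖θhat‖ ^ 2 ≤
        (1 / (n : ℝ)) * ∑ j, epsLoss α ε₁ ε₂ (sd j) ⟪xd j, θ⟫ + lam * ‖θ‖ ^ 2)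
    (hθhatLOO : ∀ θ : EuclideanSpace ℝ (Fin p),
      (1 / (n : ℝ)) * ∑ j ∈ Finset.univ.erase i, epsLoss α ε₁ ε₂ (sd j) ⟪xd j, θhatLOO⟫
          + lam * ‖θhatLOO‖ ^ 2 ≤
        (1 / (n : ℝ)) * ∑ j ∈ Finset.univ.erase i, epsLoss α ε₁ ε₂ (sd j) ⟪xd j, θ⟫
          + lam * ‖θ‖ ^ 2) :
    ∀ x ∈ X, ∀ s ∈ Set.Icc (0 : ℝ) D,
      |epsLoss α ε₁ ε₂ s ⟪x, θhat⟫ - epsLoss α ε₁ ε₂ s ⟪x, θhatLOO⟫| ≤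
        (α ⊔ (1 - α)) ^ 2 * Xmax ^ 2 * p / (2 * n * lam) := by
  intro x hx s hs
  set M : ℝ := α ⊔ (1 - α) with hM
  set K : ℝ := Xmax * Real.sqrt p with hKdef
  set A : ℝ := ‖θhat - θhatLOO‖ with hA
  have hn' : (0:ℝ) < n := Nat.cast_pos.mpr hn
  have hc : (0:ℝ) ≤ 1 / n := by positivity
  have hMpos : 0 < M := lt_of_lt_of_le (by linarith : (0:ℝ) < 1 - α) (le_max_right _ _)
  have hsqp : (0:ℝ) < Real.sqrt p := Real.sqrt_pos.mpr (by exact_mod_cast hp)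
  have hKpos : 0 < K := mul_pos hXmax hsqp
  have hK2 : K ^ 2 = Xmax ^ 2 * p := by
    rw [hKdef, mul_pow, Real.sq_sqrt (Nat.cast_nonneg p)]
  have hAnn : 0 ≤ A := norm_nonneg _
  -- strong convexity at each minimizer
  have hF : ∀ t : ℝ, 0 < t → t < 1 →
      (1 - t) * lam * A ^ 2 ≤
        ((1 / (n : ℝ)) * ∑ j, epsLoss α ε₁ ε₂ (sd j) ⟪xd j, θhatLOO⟫ + lam * ‖θhatLOO‖ ^ 2) -
        ((1 / (n : ℝ)) * ∑ j, epsLoss α ε₁ ε₂ (sd j) ⟪xd j, θhat⟫ + lam * ‖θhat‖ ^ 2) := by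
    intro t ht0 ht1
    exact min_strong lam
      (fun θ => (1 / (n : ℝ)) * ∑ j, epsLoss α ε₁ ε₂ (sd j) ⟪xd j, θ⟫) θhat θhatLOO hθhat
      (fun t ht0 ht1 => risk_convex α ε₁ ε₂ hα₀.le hα₁.le (1/n) hc Finset.univ xd sd
        θhat θhatLOO t ht0.le ht1.le) t ht0 ht1
  have hG : ∀ t : ℝ, 0 < t → t < 1 →
      (1 - t) * lam * A ^ 2 ≤
        ((1 / (n : ℝ)) * ∑ j ∈ Finset.univ.erase i, epsLoss α ε₁ ε₂ (sd j) ⟪xd j, θhat⟫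
            + lam * ‖θhat‖ ^ 2) -
        ((1 / (n : ℝ)) * ∑ j ∈ Finset.univ.erase i, epsLoss α ε₁ ε₂ (sd j) ⟪xd j, θhatLOO⟫
            + lam * ‖θhatLOO‖ ^ 2) := by
    intro t ht0 ht1
    have := min_strong lam
      (fun θ => (1 / (n : ℝ)) * ∑ j ∈ Finset.univ.erase i, epsLoss α ε₁ ε₂ (sd j) ⟪xd j, θ⟫)
      θhatLOO θhat hθhatLOO
      (fun t ht0 ht1 => risk_convex α ε₁ ε₂ hα₀.le hα₁.le (1/n) hc (Finset.univ.erase i) xd sd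
        θhatLOO θhat t ht0.le ht1.le) t ht0 ht1
    rwa [norm_sub_rev] at this
  -- sum decomposition
  have hdec : ∀ θ : EuclideanSpace ℝ (Fin p),
      (1 / (n : ℝ)) * ∑ j, epsLoss α ε₁ ε₂ (sd j) ⟪xd j, θ⟫ =
      (1 / (n : ℝ)) * ∑ j ∈ Finset.univ.erase i, epsLoss α ε₁ ε₂ (sd j) ⟪xd j, θ⟫ +
        (1 / (n : ℝ)) * epsLoss α ε₁ ε₂ (sd i) ⟪xd i, θ⟫ := by
    intro θ
    rw [← Finset.sum_erase_add Finset.univ _ (Finset.mem_univ i)]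
    ring
  -- Lipschitz bound on the loss at sample i
  have hxin : ‖xd i‖ ≤ K := (hX (xd i) (hxd i)).2
  have hinner : |⟪xd i, θhatLOO⟫ - ⟪xd i, θhat⟫| ≤ K * A := by
    rw [← inner_sub_right]
    calc |⟪xd i, θhatLOO - θhat⟫| ≤ ‖xd i‖ * ‖θhatLOO - θhat‖ := abs_real_inner_le_norm _ _
      _ = ‖xd i‖ * A := by rw [norm_sub_rev]
      _ ≤ K * A := mul_le_mul_of_nonneg_right hxin hAnn
  have hLip_i : epsLoss α ε₁ ε₂ (sd i) ⟪xd i, θhatLOO⟫ -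
      epsLoss α ε₁ ε₂ (sd i) ⟪xd i, θhat⟫ ≤ M * (K * A) := by
    have h1 := epsLoss_lipschitz α ε₁ ε₂ (sd i) ⟪xd i, θhatLOO⟫ ⟪xd i, θhat⟫ hα₀.le hα₁.le
    have h2 := le_abs_self (epsLoss α ε₁ ε₂ (sd i) ⟪xd i, θhatLOO⟫ -
      epsLoss α ε₁ ε₂ (sd i) ⟪xd i, θhat⟫)
    nlinarith [mul_le_mul_of_nonneg_left hinner hMpos.le]
  -- combine: 2·lam·A² ≤ (1/n)·M·K·A
  have hmain : 2 * lam * A ^ 2 ≤ (1 / (n : ℝ)) * (M * (K * A)) := by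
    refine limstep _ _ (by positivity) fun t ht0 ht1 => ?_
    have h1 := hF t ht0 ht1
    have h2 := hG t ht0 ht1
    have d1 := hdec θhat
    have d2 := hdec θhatLOO
    have hL : (1 / (n : ℝ)) * epsLoss α ε₁ ε₂ (sd i) ⟪xd i, θhatLOO⟫ -
        (1 / (n : ℝ)) * epsLoss α ε₁ ε₂ (sd i) ⟪xd i, θhat⟫ ≤
        (1 / (n : ℝ)) * (M * (K * A)) := by
      rw [← mul_sub]
      exact mul_le_mul_of_nonneg_left hLip_i hc
    nlinarith [h1, h2, hL]
  -- conclude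
  have hAB : 2 * (n : ℝ) * lam * A ^ 2 ≤ M * K * A := by
    have h := mul_le_mul_of_nonneg_left hmain hn'.le
    rw [show (n:ℝ) * (1 / ↑n * (M * (K * A))) = M * (K * A) by field_simp] at h
    nlinarith [h]
  have hfinal : M * (K * A) ≤ M ^ 2 * Xmax ^ 2 * p / (2 * n * lam) := by
    rw [le_div_iff₀ (by positivity : (0:ℝ) < 2 * n * lam)]
    rcases eq_or_lt_of_le hAnn with hA0 | hA0
    · rw [← hA0, show M * (K * (0:ℝ)) * (2 * n * lam) = 0 by ring]
      positivity
    · have hAle : 2 * (n : ℝ) * lam * A ≤ M * K := by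
        have : 2 * (n : ℝ) * lam * A * A ≤ M * K * A := by nlinarith [hAB]
        exact le_of_mul_le_mul_right this hA0
      calc M * (K * A) * (2 * n * lam) = M * K * (2 * n * lam * A) := by ring
        _ ≤ M * K * (M * K) := mul_le_mul_of_nonneg_left hAle (by positivity)
        _ = M ^ 2 * K ^ 2 := by ring
        _ = M ^ 2 * Xmax ^ 2 * p := by rw [hK2]; ring
  -- Lipschitz at the test point
  have hxK : ‖x‖ ≤ K := (hX x hx).2
  have hinx : |⟪x, θhat⟫ - ⟪x, θhatLOO⟫| ≤ K * A := by
    rw [← inner_sub_right]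
    calc |⟪x, θhat - θhatLOO⟫| ≤ ‖x‖ * ‖θhat - θhatLOO‖ := abs_real_inner_le_norm _ _
      _ ≤ K * A := mul_le_mul_of_nonneg_right hxK hAnn
  calc |epsLoss α ε₁ ε₂ s ⟪x, θhat⟫ - epsLoss α ε₁ ε₂ s ⟪x, θhatLOO⟫|
      ≤ M * |⟪x, θhat⟫ - ⟪x, θhatLOO⟫| :=
        epsLoss_lipschitz α ε₁ ε₂ s _ _ hα₀.le hα₁.le
    _ ≤ M * (K * A) := mul_le_mul_of_nonneg_left hinx hMpos.le
    _ ≤ M ^ 2 * Xmax ^ 2 * p / (2 * n * lam) := hfinal
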